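/- arXiv:2306.06127 — 2 statements merged into one kernel-verified Lean document; each statement's English description precedes it below -/
import Mathlib

section
/- Parity of the 3D WOCLCT: let f, Ψ : ℝ³ → 𝕆 be measurable with g_μ Bochner integrable for every μ ∈ ℝ³, and define Pf(t) := f(−t). Then for all ω, μ ∈ ℝ³, G(Pf, PΨ)(ω, μ) = G(f, Ψ)(−ω, −μ). -/
noncomputable section
open MeasureTheory Real

instance : MeasurableSpace (Quaternion ℝ) := borel _
instance : BorelSpace (Quaternion ℝ) := ⟨rfl⟩

/-- ℝ³ with Lebesgue measure and the Euclidean norm. -/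
abbrev R3 := EuclideanSpace ℝ (Fin 3)

/-- Cayley–Dickson model of the octonions: 𝕆 = ℍ × ℍ. -/
abbrev Octo := Quaternion ℝ × Quaternion ℝ

/-- Cayley–Dickson multiplication: (a,b) * (c,d) = (a*c − (star d)*b, d*a + b*(star c)). -/
def omul (z w : Octo) : Octo :=
  (z.1 * w.1 - star w.2 * z.2, w.2 * z.1 + z.2 * star w.1)

/-- Octonion conjugation. -/
def oconj (z : Octo) : Octo := (star z.1, -z.2)

/-- Norm-square of an octonion. -/
def Nsq (z : Octo) : ℝ := Quaternion.normSq z.1 + Quaternion.normSq z.2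

/-- Octonion norm |z| = √(N z). -/
def onorm (z : Octo) : ℝ := Real.sqrt (Nsq z)

/-- The octonion unit 1 = (1,0). -/
def oneO : Octo := (1, 0)
/-- ε₁ = (i, 0). -/
def eps1 : Octo := ((⟨0,1,0,0⟩ : Quaternion ℝ), 0)
/-- ε₂ = (j, 0). -/
def eps2 : Octo := ((⟨0,0,1,0⟩ : Quaternion ℝ), 0)
/-- ε₃ = e₄ = (0,1). -/
def eps3 : Octo := ((0 : Quaternion ℝ), (1 : Quaternion ℝ))

/-- Phase θ(t, ω) = a t²/(2b) − t ω/b + d ω²/(2b) − π/2. -/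
def phase (a b d t ω : ℝ) : ℝ :=
  a * t ^ 2 / (2 * b) - t * ω / b + d * ω ^ 2 / (2 * b) - π / 2

/-- Kernel κ(t, ω) = (2π|b|)^{−1/2} • ((cos θ) • 1 + (sin θ) • ε). -/
def kernel (a b d : ℝ) (ε : Octo) (t ω : ℝ) : Octo :=
  ((2 * π * |b|) ^ (-(1 : ℝ) / 2)) •
    (Real.cos (phase a b d t ω) • oneO + Real.sin (phase a b d t ω) • ε)

/-- The 3D octonion linear canonical transform (OCLCT). -/
def oclct (a₁ b₁ d₁ a₂ b₂ d₂ a₃ b₃ d₃ : ℝ) (h : R3 → Octo) (ω : R3) : Octo :=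
  ∫ t : R3, omul (omul (omul (h t) (kernel a₁ b₁ d₁ eps1 (t 0) (ω 0)))
      (kernel a₂ b₂ d₂ eps2 (t 1) (ω 1))) (kernel a₃ b₃ d₃ eps3 (t 2) (ω 2))

/-- The 3D windowed octonion linear canonical transform (WOCLCT):
G(f,Ψ)(ω,μ) = ℒ(t ↦ f(t) * oconj(Ψ(t−μ)))(ω). -/
def woclct (a₁ b₁ d₁ a₂ b₂ d₂ a₃ b₃ d₃ : ℝ) (f Ψ : R3 → Octo) (ω μ : R3) : Octo :=
  oclct a₁ b₁ d₁ a₂ b₂ d₂ a₃ b₃ d₃ (fun t => omul (f t) (oconj (Ψ (t - μ)))) ω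

/-! Each phase is a quadratic form in `(t, ω)`, so reflecting `t` in a kernel is the same as
reflecting `ω`; the substitution `t ↦ -t` in the integral then moves the reflection from the signal
to the frequency. The windowed signal of `(Pf, PΨ)` at `μ` is the reflection of that of `(f, Ψ)`
at `-μ`. -/

theorem phase_neg_left (a b d t ω : ℝ) : phase a b d (-t) ω = phase a b d t (-ω) := by
  unfold phase
  ring

theorem kernel_neg_left (a b d : ℝ) (ε : Octo) (t ω : ℝ) :
    kernel a b d ε (-t) ω = kernel a b d ε t (-ω) := by
  simp only [kernel, phase_neg_left]

theorem oclct_comp_neg (a₁ b₁ d₁ a₂ b₂ d₂ a₃ b₃ d₃ : ℝ) (h : R3 → Octo) (ω : R3) :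
    oclct a₁ b₁ d₁ a₂ b₂ d₂ a₃ b₃ d₃ (fun t => h (-t)) ω =
      oclct a₁ b₁ d₁ a₂ b₂ d₂ a₃ b₃ d₃ h (-ω) := by
  unfold oclct
  rw [← integral_neg_eq_self]
  simp only [neg_neg, PiLp.neg_apply, kernel_neg_left]

theorem woclct_parity_general (a₁ b₁ d₁ a₂ b₂ d₂ a₃ b₃ d₃ : ℝ)
    (f Ψ : R3 → Octo)
    (ω μ : R3) :
    woclct a₁ b₁ d₁ a₂ b₂ d₂ a₃ b₃ d₃ (fun t => f (-t)) (fun t => Ψ (-t)) ω μ =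
      woclct a₁ b₁ d₁ a₂ b₂ d₂ a₃ b₃ d₃ f Ψ (-ω) (-μ) := by
  have window_reflect : (fun t : R3 => omul (f (-t)) (oconj (Ψ (-(t - μ))))) =
      fun t => omul (f (-t)) (oconj (Ψ (-t - -μ))) := by
    funext t
    rw [neg_sub, sub_eq_neg_add, sub_neg_eq_add]
  unfold woclct
  rw [window_reflect]
  exact oclct_comp_neg _ _ _ _ _ _ _ _ _ (fun t => omul (f t) (oconj (Ψ (t - -μ)))) ω

/-- Parity of the 3D WOCLCT: G(Pf, PΨ)(ω, μ) = G(f, Ψ)(−ω, −μ) where Pf(t) = f(−t). -/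
theorem woclct_parity (a₁ b₁ c₁ d₁ a₂ b₂ c₂ d₂ a₃ b₃ c₃ d₃ : ℝ)
    (hdet₁ : a₁ * d₁ - b₁ * c₁ = 1) (hdet₂ : a₂ * d₂ - b₂ * c₂ = 1)
    (hdet₃ : a₃ * d₃ - b₃ * c₃ = 1)
    (hb₁ : b₁ ≠ 0) (hb₂ : b₂ ≠ 0) (hb₃ : b₃ ≠ 0)
    (f Ψ : R3 → Octo) (hf : Measurable f) (hΨ : Measurable Ψ)
    (hint : ∀ μ : R3, Integrable (fun t => omul (f t) (oconj (Ψ (t - μ)))))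
    (ω μ : R3) :
    woclct a₁ b₁ d₁ a₂ b₂ d₂ a₃ b₃ d₃ (fun t => f (-t)) (fun t => Ψ (-t)) ω μ =
      woclct a₁ b₁ d₁ a₂ b₂ d₂ a₃ b₃ d₃ f Ψ (-ω) (-μ) :=
  woclct_parity_general a₁ b₁ d₁ a₂ b₂ d₂ a₃ b₃ d₃ f Ψ ω μ
end
end

section
/- Sharp Pitt's inequality for the 3D WOCLCT (conditional form): let 0 ≤ β < 3, let f, Ψ : ℝ³ → 𝕆 be measurable with g_μ Bochner integrable for every μ, ∫ |t|^β |f(t)|² dt < ∞ and ‖Ψ‖₂² < ∞, and suppose (ω,μ) ↦ G(f,Ψ)(ω,μ) is measurable. If for every μ ∈ ℝ³ the Pitt inequality ∫_{ℝ³} |ω|^{−β} |ℒg_μ(ω)|² dω ≤ (M_β / (2π |b₃| |b₁ b₂|^β)) ∫_{ℝ³} |t|^β |g_μ(t)|² dt holds, where M_β := (Γ((3−β)/4)/Γ((3+β)/4))², then ∫_{ℝ³} ∫_{ℝ³} |ω|^{−β} |G(f,Ψ)(ω,μ)|² dω dμ ≤ (M_β ‖Ψ‖₂² / (2π |b₃|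 |b₁ b₂|^β)) ∫_{ℝ³} |t|^β |f(t)|² dt. -/
noncomputable section
open MeasureTheory Real

/-! The octonion norm is multiplicative, so the weight in the Pitt bound for `g_μ` splits as
`|t|^β |f t|² · N(Ψ(t - μ))`. Integrating the assumed Pitt bound over `μ` and swapping the
integrals (Fubini, plus translation and reflection invariance of Lebesgue measure) turns the
right-hand side into `‖Ψ‖₂² ∫ |t|^β |f t|² dt`. -/

lemma nsq_nonneg (z : Octo) : 0 ≤ Nsq z :=
  add_nonneg Quaternion.normSq_nonneg Quaternion.normSq_nonneg

lemma onorm_sq (z : Octo) : onorm z ^ 2 = Nsq z := Real.sq_sqrt (nsq_nonneg z)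

lemma nsq_oconj (z : Octo) : Nsq (oconj z) = Nsq z := by
  simp [Nsq, oconj]

lemma nsq_omul (z w : Octo) : Nsq (omul z w) = Nsq z * Nsq w := by
  simp only [Nsq, omul, Quaternion.normSq_def', Quaternion.re_mul, Quaternion.imI_mul,
    Quaternion.imJ_mul, Quaternion.imK_mul, Quaternion.re_sub, Quaternion.imI_sub,
    Quaternion.imJ_sub, Quaternion.imK_sub, Quaternion.re_add, Quaternion.imI_add,
    Quaternion.imJ_add, Quaternion.imK_add, Quaternion.re_star, Quaternion.imI_star,
    Quaternion.imJ_star, Quaternion.imK_star]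
  ring

lemma onorm_omul_oconj_sq (z w : Octo) : onorm (omul z (oconj w)) ^ 2 = onorm z ^ 2 * Nsq w := by
  rw [onorm_sq, onorm_sq, nsq_omul, nsq_oconj]

section WindowedIntegral

variable {G : Type*} [AddCommGroup G] [MeasurableSpace G] [MeasurableAdd₂ G] [MeasurableNeg G]
  {μ : Measure G} [SFinite μ] [μ.IsAddLeftInvariant] [μ.IsNegInvariant] {φ ψ : G → ℝ}

theorem integrable_prod_mul_comp_sub (hφ : Integrable φ μ) (hψ : Integrable ψ μ) :
    Integrable (fun p : G × G => φ p.2 * ψ (p.2 - p.1)) (μ.prod μ) := by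
  simpa [neg_sub] using
    hφ.convolution_integrand (ContinuousLinearMap.mul ℝ ℝ) hψ.comp_neg

theorem integral_integral_mul_comp_sub (hφ : Integrable φ μ) (hψ : Integrable ψ μ) :
    ∫ x, ∫ t, φ t * ψ (t - x) ∂μ ∂μ = (∫ t, φ t ∂μ) * ∫ t, ψ t ∂μ := by
  rw [integral_integral_swap (integrable_prod_mul_comp_sub hφ hψ)]
  simp_rw [integral_const_mul, integral_sub_left_eq_self, integral_mul_const]

theorem integral_le_of_forall_le_integral_mul_comp_sub {F : G → ℝ} (c : ℝ)
    (hF : ∀ x, 0 ≤ F x) (hφ : Integrable φ μ) (hψ : Integrable ψ μ)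
    (hle : ∀ x, F x ≤ c * ∫ t, φ t * ψ (t - x) ∂μ) :
    ∫ x, F x ∂μ ≤ c * ((∫ t, φ t ∂μ) * ∫ t, ψ t ∂μ) :=
  calc ∫ x, F x ∂μ ≤ ∫ x, c * ∫ t, φ t * ψ (t - x) ∂μ ∂μ :=
        integral_mono_of_nonneg (ae_of_all _ hF)
          ((integrable_prod_mul_comp_sub hφ hψ).integral_prod_left.const_mul c) (ae_of_all _ hle)
    _ = c * ((∫ t, φ t ∂μ) * ∫ t, ψ t ∂μ) := by
        rw [integral_const_mul, integral_integral_mul_comp_sub hφ hψ]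

end WindowedIntegral

theorem woclct_sharp_pitt_general (a₁ b₁ d₁ a₂ b₂ d₂ a₃ b₃ d₃ : ℝ) (β : ℝ) (f Ψ : R3 → Octo)
    (hffin : Integrable (fun t : R3 => ‖t‖ ^ β * (onorm (f t)) ^ 2))
    (hΨfin : Integrable (fun t : R3 => Nsq (Ψ t)))
    (hpitt : ∀ μ : R3,
      ∫ ω : R3, ‖ω‖ ^ (-β) *
          (onorm (oclct a₁ b₁ d₁ a₂ b₂ d₂ a₃ b₃ d₃
            (fun t => omul (f t) (oconj (Ψ (t - μ)))) ω)) ^ 2 ≤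
        ((Real.Gamma ((3 - β) / 4) / Real.Gamma ((3 + β) / 4)) ^ 2 /
            (2 * π * |b₃| * |b₁ * b₂| ^ β)) *
          ∫ t : R3, ‖t‖ ^ β * (onorm (omul (f t) (oconj (Ψ (t - μ))))) ^ 2) :
    ∫ μ : R3, ∫ ω : R3,
        ‖ω‖ ^ (-β) * (onorm (woclct a₁ b₁ d₁ a₂ b₂ d₂ a₃ b₃ d₃ f Ψ ω μ)) ^ 2 ≤
      ((Real.Gamma ((3 - β) / 4) / Real.Gamma ((3 + β) / 4)) ^ 2 * (∫ t : R3, Nsq (Ψ t)) /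
          (2 * π * |b₃| * |b₁ * b₂| ^ β)) *
        ∫ t : R3, ‖t‖ ^ β * (onorm (f t)) ^ 2 := by
  simp_rw [onorm_omul_oconj_sq, ← mul_assoc] at hpitt
  refine (integral_le_of_forall_le_integral_mul_comp_sub _
    (fun μ => integral_nonneg fun ω => by positivity) hffin hΨfin hpitt).trans_eq ?_
  ring

/-- Sharp Pitt's inequality for the 3D WOCLCT (conditional form). -/
theorem woclct_sharp_pitt (a₁ b₁ c₁ d₁ a₂ b₂ c₂ d₂ a₃ b₃ c₃ d₃ : ℝ)
    (hdet₁ : a₁ * d₁ - b₁ * c₁ = 1) (hdet₂ : a₂ * d₂ - b₂ * c₂ = 1)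
    (hdet₃ : a₃ * d₃ - b₃ * c₃ = 1)
    (hb₁ : b₁ ≠ 0) (hb₂ : b₂ ≠ 0) (hb₃ : b₃ ≠ 0)
    (β : ℝ) (hβ0 : 0 ≤ β) (hβ3 : β < 3)
    (f Ψ : R3 → Octo) (hf : Measurable f) (hΨ : Measurable Ψ)
    (hint : ∀ μ : R3, Integrable (fun t => omul (f t) (oconj (Ψ (t - μ)))))
    (hffin : Integrable (fun t : R3 => ‖t‖ ^ β * (onorm (f t)) ^ 2))
    (hΨfin : Integrable (fun t : R3 => Nsq (Ψ t)))
    (hGmeas : Measurable (fun p : R3 × R3 => woclct a₁ b₁ d₁ a₂ b₂ d₂ a₃ b₃ d₃ f Ψ p.1 p.2))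
    (hpitt : ∀ μ : R3,
      ∫ ω : R3, ‖ω‖ ^ (-β) *
          (onorm (oclct a₁ b₁ d₁ a₂ b₂ d₂ a₃ b₃ d₃
            (fun t => omul (f t) (oconj (Ψ (t - μ)))) ω)) ^ 2 ≤
        ((Real.Gamma ((3 - β) / 4) / Real.Gamma ((3 + β) / 4)) ^ 2 /
            (2 * π * |b₃| * |b₁ * b₂| ^ β)) *
          ∫ t : R3, ‖t‖ ^ β * (onorm (omul (f t) (oconj (Ψ (t - μ))))) ^ 2) :
    ∫ μ : R3, ∫ ω : R3,
        ‖ω‖ ^ (-β) * (onorm (woclct a₁ b₁ d₁ a₂ b₂ d₂ a₃ b₃ d₃ f Ψ ω μ)) ^ 2 ≤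
      ((Real.Gamma ((3 - β) / 4) / Real.Gamma ((3 + β) / 4)) ^ 2 * (∫ t : R3, Nsq (Ψ t)) /
          (2 * π * |b₃| * |b₁ * b₂| ^ β)) *
        ∫ t : R3, ‖t‖ ^ β * (onorm (f t)) ^ 2 :=
  woclct_sharp_pitt_general a₁ b₁ d₁ a₂ b₂ d₂ a₃ b₃ d₃ β f Ψ hffin hΨfin hpitt
end
end
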